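/- arXiv:1907.00467 — 2 statements merged into one kernel-verified Lean document; each statement's English description precedes it below -/
import Mathlib

section
/- The backward output-function semantics of a register transducer is correct: for w = w₁…wₙ ∈ Γ*, the image of w by the register transducer (Q, q_I, R, δ, F) equals φ(G(q_I)), where G = δᴼ(w₁, δᴼ(w₂, … δᴼ(wₙ, F)…)) and φ : (Σ ∪ R)* → Σ* is the morphism erasing all letters from R. -/
/-- A register transducer: states `Q` with initial state, registers `R`,
a transition function `δ : Q × Γ → Q × (R → (S ⊕ R)*)`, and an output
function `F : Q → (S ⊕ R)*`. -/
structure RegisterTransducer (Γ S Q R : Type) where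
  init : Q
  δ : Q × Γ → Q × (R → List (S ⊕ R))
  out : Q → List (S ⊕ R)

/-- `subst s` is the monoid morphism `(S ∪ R)* → S*` fixing each letter of `S`
and substituting each register `r` by `s r`. -/
def subst {S R : Type} (s : R → List S) : List (S ⊕ R) → List S :=
  fun u => u.flatMap (fun x => match x with | .inl a => [a] | .inr r => s r)

/-- One transition step on configurations `(q, s)` with `s : R → S*`. -/
def RegisterTransducer.step {Γ S Q R : Type} (T : RegisterTransducer Γ S Q R)
    (cfg : Q × (R → List S)) (c : Γ) : Q × (R → List S) :=
  let (q', u) := T.δ (cfg.1, c)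
  (q', fun r => subst cfg.2 (u r))

/-- The configuration reached from the initial configuration `(q_I, r ↦ ε)`
after reading `w` left to right. -/
def RegisterTransducer.run {Γ S Q R : Type} (T : RegisterTransducer Γ S Q R)
    (w : List Γ) : Q × (R → List S) :=
  w.foldl T.step (T.init, fun _ => [])

/-- The image of `w`: `s*(F q)` where `(q, s)` is the reached configuration. -/
def RegisterTransducer.output {Γ S Q R : Type} (T : RegisterTransducer Γ S Q R)
    (w : List Γ) : List S :=
  subst (T.run w).2 (T.out (T.run w).1)

/-- `substR u` substitutes each register letter `r` in a word over `S ∪ R` by the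
word `u r` (a morphism `(S ∪ R)* → (S ∪ R)*` fixing letters of `S`). -/
def substR {S R : Type} (u : R → List (S ⊕ R)) : List (S ⊕ R) → List (S ⊕ R) :=
  fun v => v.flatMap (fun x => match x with | .inl a => [Sum.inl a] | .inr r => u r)

/-- The backward action `δᴼ` of a letter on output functions:
`δᴼ(a, G)(q) = s*_{a,q}(G q'_{a,q})` where `(q'_{a,q}, s_{a,q}) = δ(q, a)`. -/
def RegisterTransducer.deltaO {Γ S Q R : Type} (T : RegisterTransducer Γ S Q R)
    (a : Γ) (G : Q → List (S ⊕ R)) : Q → List (S ⊕ R) :=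
  fun q => substR (T.δ (q, a)).2 (G (T.δ (q, a)).1)

/-- `erase` is the morphism `(S ∪ R)* → S*` erasing all register letters. -/
def erase {S R : Type} : List (S ⊕ R) → List S :=
  fun v => v.flatMap (fun x => match x with | .inl a => [a] | .inr _ => [])

lemma subst_substR {S R : Type} (s : R → List S) (u : R → List (S ⊕ R))
    (v : List (S ⊕ R)) :
    subst s (substR u v) = subst (fun r => subst s (u r)) v := by
  induction v with
  | nil => rfl
  | cons x t ih =>
    cases x with
    | inl a => simp [subst, substR] at ih ⊢; exact ih
    | inr r => simp [subst, substR] at ih ⊢; exact ih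

lemma erase_eq_subst_nil {S R : Type} (v : List (S ⊕ R)) :
    erase v = subst (fun _ : R => ([] : List S)) v := by
  induction v with
  | nil => rfl
  | cons x t ih => cases x <;> simp only [erase, subst, List.flatMap_cons] at ih ⊢ <;> rw [ih]

lemma foldr_deltaO_main {Γ S Q R : Type} (T : RegisterTransducer Γ S Q R)
    (w : List Γ) : ∀ (q : Q) (s : R → List S),
    subst (w.foldl T.step (q, s)).2 (T.out (w.foldl T.step (q, s)).1)
      = subst s ((w.foldr T.deltaO T.out) q) := by
  induction w with
  | nil => intro q s; rfl
  | cons a t ih =>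
    intro q s
    simp only [List.foldl_cons, List.foldr_cons]
    rw [show T.step (q, s) a = ((T.δ (q, a)).1, fun r => subst s ((T.δ (q, a)).2 r)) from rfl]
    rw [ih, RegisterTransducer.deltaO, subst_substR]

/-- Correctness of the backward output-function semantics: the image of
`w = w₁…wₙ` by the register transducer equals `φ(G q_I)` where
`G = δᴼ(w₁, δᴼ(w₂, … δᴼ(wₙ, F) …))` and `φ` erases registers. -/
theorem deltaO_correct {Γ S Q R : Type} (T : RegisterTransducer Γ S Q R)
    (w : List Γ) :
    T.output w = erase ((w.foldr T.deltaO T.out) T.init) := by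
  rw [RegisterTransducer.output, RegisterTransducer.run, foldr_deltaO_main,
    erase_eq_subst_nil]
end

section
/- If L ⊆ Σ* is a regular language, then {w ∈ Σ* : w^{|w|} ∈ L} is regular. -/
open Function

section aux

variable {σ : Type} [Fintype σ] [DecidableEq σ]

private def kk (σ : Type) [Fintype σ] [DecidableEq σ] : ℕ := Fintype.card (σ → σ)

private def normc (σ : Type) [Fintype σ] [DecidableEq σ] (n : ℕ) : ℕ :=
  if n < kk σ then n else kk σ + (n - kk σ) % (kk σ).factorial

private lemma normc_lt (n : ℕ) : normc σ n < kk σ + (kk σ).factorial := by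
  unfold normc
  split
  · have := (kk σ).factorial_pos
    omega
  · have := Nat.mod_lt (n - kk σ) (Nat.factorial_pos (kk σ))
    omega

private lemma pigeon (g : σ → σ) : ∃ i d, i < kk σ ∧ 0 < d ∧ d ≤ kk σ ∧ g^[i] = g^[i + d] := by
  have h : Fintype.card (σ → σ) < Fintype.card (Fin (kk σ + 1)) := by
    simp [kk]
  obtain ⟨a, b, hab, heq⟩ := Fintype.exists_ne_map_eq_of_card_lt
    (fun m : Fin (kk σ + 1) => g^[(m : ℕ)]) h
  have ha : (a : ℕ) < kk σ + 1 := a.isLt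
  have hb : (b : ℕ) < kk σ + 1 := b.isLt
  have hne : (a : ℕ) ≠ (b : ℕ) := fun h => hab (Fin.ext h)
  rcases Nat.lt_or_ge (a : ℕ) (b : ℕ) with h' | h'
  · refine ⟨a, (b : ℕ) - a, by omega, by omega, by omega, ?_⟩
    rw [heq]
    have : (a : ℕ) + ((b : ℕ) - (a : ℕ)) = (b : ℕ) := by omega
    rw [this]
  · have h'' : (b : ℕ) < (a : ℕ) := by omega
    refine ⟨b, (a : ℕ) - b, by omega, by omega, by omega, ?_⟩
    rw [← heq]
    have : (b : ℕ) + ((a : ℕ) - (b : ℕ)) = (a : ℕ) := by omega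
    rw [this]

private lemma iter_stab (g : σ → σ) {i d n : ℕ} (hg : g^[i] = g^[i + d]) (hn : i ≤ n) :
    g^[n] = g^[n + d] := by
  have e1 : n = (n - i) + i := by omega
  have e2 : n + d = (n - i) + (i + d) := by omega
  rw [e2, Function.iterate_add, ← hg, ← Function.iterate_add, ← e1]

private lemma iter_stab_mul (g : σ → σ) {i d n : ℕ} (hg : g^[i] = g^[i + d]) (hn : i ≤ n)
    (m : ℕ) : g^[n] = g^[n + d * m] := by
  induction m with
  | zero => simp
  | succ m ih =>
      rw [ih, iter_stab g hg (by omega)]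
      have : n + d * m + d = n + d * (m + 1) := by ring
      rw [this]

private lemma iter_norm_eq (g : σ → σ) {n n' : ℕ} (h : normc σ n = normc σ n') :
    g^[n] = g^[n'] := by
  obtain ⟨i, d, hi, hd0, hdk, hg⟩ := pigeon g
  unfold normc at h
  have key : ∀ a b : ℕ, kk σ ≤ a → kk σ ≤ b → a ≤ b →
      (a - kk σ) % (kk σ).factorial = (b - kk σ) % (kk σ).factorial → g^[a] = g^[b] := by
    intro a b ha hb hab hmod
    have hdvd : (kk σ).factorial ∣ (b - kk σ) - (a - kk σ) :=
      (Nat.modEq_iff_dvd' (by omega)).mp hmod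
    obtain ⟨c, hc⟩ := hdvd
    have hdvd2 : d ∣ (kk σ).factorial := Nat.dvd_factorial hd0 hdk
    obtain ⟨e, he⟩ := hdvd2
    have hb' : b = a + d * (e * c) := by
      have h2 : b - a = (kk σ).factorial * c := by omega
      rw [he] at h2
      have h3 : b - a = d * (e * c) := by rw [h2]; ring
      omega
    rw [hb']
    exact iter_stab_mul g hg (by omega) _
  have hr := Nat.mod_lt (n - kk σ) (Nat.factorial_pos (kk σ))
  have hr' := Nat.mod_lt (n' - kk σ) (Nat.factorial_pos (kk σ))
  by_cases h1 : n < kk σ <;> by_cases h2 : n' < kk σ <;> simp only [if_pos, if_neg, h1, h2,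
    if_true, if_false] at h
  · rw [h]
  · exfalso; omega
  · exfalso; omega
  · push_neg at h1 h2
    have h' : (n - kk σ) % (kk σ).factorial = (n' - kk σ) % (kk σ).factorial := by omega
    rcases Nat.le_total n n' with hle | hle
    · exact key n n' h1 h2 hle h'
    · exact (key n' n h2 h1 hle h'.symm).symm

private lemma normc_idem (n : ℕ) : normc σ (normc σ n) = normc σ n := by
  by_cases h : n < kk σ
  · simp [normc, h]
  · have hr := Nat.mod_lt (n - kk σ) (Nat.factorial_pos (kk σ))
    simp only [normc, if_neg h]
    rw [if_neg (by omega)]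
    congr 1
    rw [Nat.add_sub_cancel_left, Nat.mod_eq_of_lt (by omega)]

private lemma normc_succ (n : ℕ) : normc σ (normc σ n + 1) = normc σ (n + 1) := by
  by_cases h : n < kk σ
  · simp [normc, h]
  · have hr := Nat.mod_lt (n - kk σ) (Nat.factorial_pos (kk σ))
    simp only [normc, if_neg h]
    rw [if_neg (by omega), if_neg (by omega)]
    congr 1
    have h1 : kk σ + (n - kk σ) % (kk σ).factorial + 1 - kk σ
        = (n - kk σ) % (kk σ).factorial + 1 := by omega
    have h2 : n + 1 - kk σ = (n - kk σ) + 1 := by omega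
    rw [h1, h2, Nat.add_mod ((n - kk σ) % (kk σ).factorial) 1, Nat.mod_mod_of_dvd _ dvd_rfl,
      ← Nat.add_mod]

end aux

/-- If `L` is a regular language, then `{w : w^{|w|} ∈ L}` is regular, where
`w^{|w|}` is `w` concatenated with itself `|w|` times. -/
theorem regular_w_pow_length {S : Type} [Fintype S] (L : Language S)
    (hL : L.IsRegular) :
    Language.IsRegular {w : List S | (List.replicate w.length w).flatten ∈ L} := by
  obtain ⟨σ, hfin, M, hM⟩ := hL
  haveI : DecidableEq σ := Classical.decEq σ
  refine ⟨(σ → σ) × Fin (kk σ + (kk σ).factorial), inferInstance, ?_⟩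
  set M' : DFA S ((σ → σ) × Fin (kk σ + (kk σ).factorial)) :=
    ⟨fun p a => (fun s => M.step (p.1 s) a, ⟨normc σ (p.2.val + 1), normc_lt _⟩),
      (id, ⟨normc σ 0, normc_lt _⟩),
      {p | p.1^[p.2.val] M.start ∈ M.accept}⟩ with hM'
  refine ⟨M', ?_⟩
  have hinv : ∀ w : List S, M'.eval w =
      (fun s => M.evalFrom s w, ⟨normc σ w.length, normc_lt _⟩) := by
    intro w
    induction w using List.reverseRecOn with
    | nil => rfl
    | append_singleton w a ih =>
        rw [DFA.eval, DFA.evalFrom_append_singleton, ← DFA.eval, ih]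
        refine Prod.ext ?_ ?_
        · funext s; simp [M']
        · simp only [M']
          simp [normc_succ]
  have hrep : ∀ w : List S, ∀ s : σ,
      M.evalFrom s ((List.replicate w.length w).flatten) =
        (fun s => M.evalFrom s w)^[w.length] s := by
    intro w
    generalize w.length = n
    induction n with
    | zero => intro s; rfl
    | succ n ih =>
        intro s
        rw [List.replicate_succ, List.flatten_cons]
        have h0 : M.evalFrom s (w ++ (List.replicate n w).flatten)
            = M.evalFrom (M.evalFrom s w) ((List.replicate n w).flatten) := by
          simp [DFA.evalFrom, List.foldl_append]
        rw [h0, ih, Function.iterate_succ_apply]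
  ext w
  rw [← hM]
  show w ∈ M'.accepts ↔ (List.replicate w.length w).flatten ∈ M.accepts
  rw [DFA.mem_accepts, DFA.mem_accepts, hinv]
  show (fun s => M.evalFrom s w)^[normc σ w.length] M.start ∈ M.accept ↔ _
  rw [iter_norm_eq (fun s => M.evalFrom s w) (normc_idem w.length), DFA.eval, hrep]
end
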